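/- Let 𝒞 = (V,ℛ) be a coherent configuration with principal idempotent P₀ = Σ_{X ∈ Fib(𝒞)} J_X/|X|, and let U, U' be disjoint nonempty unions of fibers with V = U ∪ U'. Then 𝒞 is the internal direct sum 𝒞_U ⊞ 𝒞_{U'} (i.e., |ℛ_{X,Y}| = 1 for all fibers X ⊆ U, Y ⊆ U') if and only if 𝒫_U(𝒞) ∩ 𝒫_{U'}(𝒞) = {P₀}, where 𝒫_W(𝒞) := {P ∈ 𝒫(𝒞) : P·I_W ≠ 0}. -/

import Mathlib

open scoped Classical

namespace CCPaper

variable {V : Type*}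

/-- The diagonal relation `Δ_X = {(x,x) : x ∈ X}` on a subset `X ⊆ V`. -/
def diag (X : Set V) : Set (V × V) := {p : V × V | p.1 ∈ X ∧ p.1 = p.2}

/-- The transpose `R^t = {(v,u) : (u,v) ∈ R}` of a relation. -/
def transp (R : Set (V × V)) : Set (V × V) := Prod.swap ⁻¹' R

/-- The intersection number `|{w : (p.1,w) ∈ R, (w,p.2) ∈ S}|` at a pair `p`. -/
noncomputable def iNum (R S : Set (V × V)) (p : V × V) : ℕ :=
  Nat.card {w : V | (p.1, w) ∈ R ∧ (w, p.2) ∈ S}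

/-- `ℛ` is a coherent configuration (scheme) on the finite set `V`:
(C1) `ℛ` consists of nonempty relations partitioning `V × V`;
(C2) the diagonal is a union of relations of `ℛ`;
(C3) `ℛ` is closed under transposition;
(C4) intersection numbers are constant on each relation of `ℛ`. -/
def IsCC [Fintype V] (ℛ : Set (Set (V × V))) : Prop :=
  (∀ R ∈ ℛ, R.Nonempty) ∧
  (∀ p : V × V, ∃! R, R ∈ ℛ ∧ p ∈ R) ∧
  (∀ R ∈ ℛ, (∃ p ∈ R, p.1 = p.2) → ∀ p ∈ R, p.1 = p.2) ∧
  (∀ R ∈ ℛ, transp R ∈ ℛ) ∧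
  (∀ R ∈ ℛ, ∀ S ∈ ℛ, ∀ T ∈ ℛ, ∀ p ∈ T, ∀ q ∈ T, iNum R S p = iNum R S q)

/-- A fiber of the configuration: a nonempty `X ⊆ V` with `Δ_X ∈ ℛ`. -/
def IsFiber [Fintype V] (ℛ : Set (Set (V × V))) (X : Set V) : Prop :=
  X.Nonempty ∧ diag X ∈ ℛ

/-- `ℛ_{X,Y}`, the set of basis relations contained in `X × Y`. -/
def relsBtw [Fintype V] (ℛ : Set (Set (V × V))) (X Y : Set V) : Set (Set (V × V)) :=
  {R | R ∈ ℛ ∧ R ⊆ X ×ˢ Y}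

/-- Out-degree `d_R = |R_out(x)|` (computed at a chosen point of `R`;
for a basis relation of a scheme this is independent of the point). -/
noncomputable def outDeg (R : Set (V × V)) : ℕ :=
  if h : R.Nonempty then Nat.card {y : V | (h.choose.1, y) ∈ R} else 0

/-- In-degree `e_R = |R_in(y)|` (computed at a chosen point of `R`). -/
noncomputable def inDeg (R : Set (V × V)) : ℕ :=
  if h : R.Nonempty then Nat.card {x : V | (x, h.choose.2) ∈ R} else 0

/-- The structure constant `c_{RS}^T` (computed at a chosen pair of `T`). -/
noncomputable def sConst (R S T : Set (V × V)) : ℕ :=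
  if h : T.Nonempty then iNum R S h.choose else 0

/-- The complex product `RS = {T ∈ ℛ : c_{RS}^T > 0}`. -/
def cProd [Fintype V] (ℛ : Set (Set (V × V))) (R S : Set (V × V)) : Set (Set (V × V)) :=
  {T | T ∈ ℛ ∧ 0 < sConst R S T}

/-- A relation is thin if `d_R = e_R = 1`. -/
def IsThin (R : Set (V × V)) : Prop := outDeg R = 1 ∧ inDeg R = 1

/-- `ℛ` is `r`-balanced: `|ℛ_{X,Y}| = r` for all fibers `X, Y`. -/
def IsBalancedWith [Fintype V] (ℛ : Set (Set (V × V))) (r : ℕ) : Prop :=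
  ∀ X Y : Set V, IsFiber ℛ X → IsFiber ℛ Y → Nat.card (relsBtw ℛ X Y) = r

/-- `ℛ` is balanced: `|ℛ_{X,Y}|` is the same for all pairs of fibers. -/
def IsBalanced [Fintype V] (ℛ : Set (Set (V × V))) : Prop := ∃ r : ℕ, IsBalancedWith ℛ r

/-- An `(m,n,r)`-scheme: a coherent configuration which is `r`-balanced, all of whose
fibers have size `m`, and which has exactly `n` fibers. -/
def IsMNRScheme [Fintype V] (ℛ : Set (Set (V × V))) (m n r : ℕ) : Prop :=
  IsCC ℛ ∧ IsBalancedWith ℛ r ∧ (∀ X : Set V, IsFiber ℛ X → Nat.card X = m) ∧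
    Nat.card {X : Set V | IsFiber ℛ X} = n

/-- A scheme is reduced if no basis relation between distinct fibers is thin. -/
def IsReduced [Fintype V] (ℛ : Set (Set (V × V))) : Prop :=
  ∀ X Y : Set V, IsFiber ℛ X → IsFiber ℛ Y → X ≠ Y → ∀ R ∈ relsBtw ℛ X Y, ¬ IsThin R

/-- A (possibly empty) union of fibers. -/
def IsFiberUnion [Fintype V] (ℛ : Set (Set (V × V))) (U : Set V) : Prop :=
  ∃ F : Set (Set V), (∀ X ∈ F, IsFiber ℛ X) ∧ U = ⋃₀ F

/-- The adjacency matrix of a relation. -/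
noncomputable def adjMat [Fintype V] (R : Set (V × V)) : Matrix V V ℂ :=
  fun u v => if (u, v) ∈ R then 1 else 0

/-- The diagonal idempotent `I_X` of a subset `X ⊆ V`. -/
noncomputable def idMat [Fintype V] (X : Set V) : Matrix V V ℂ :=
  fun u v => if u = v ∧ u ∈ X then 1 else 0

/-- The adjacency algebra `𝒜(𝒞)`, the subalgebra of `Mat_V(ℂ)` spanned by the
adjacency matrices of the basis relations. -/
noncomputable def adjAlg [Fintype V] [DecidableEq V] (ℛ : Set (Set (V × V))) :
    Subalgebra ℂ (Matrix V V ℂ) :=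
  Algebra.adjoin ℂ (adjMat '' ℛ)

/-- `P` is a central primitive idempotent of the (multiplicatively closed) set of
matrices `S`: `P ∈ S` is a nonzero idempotent commuting with everything in `S`, which is
not the sum of two nonzero orthogonal central idempotents of `S`. -/
def IsCPIin [Fintype V] (S : Set (Matrix V V ℂ)) (P : Matrix V V ℂ) : Prop :=
  P ∈ S ∧ P ≠ 0 ∧ P * P = P ∧ (∀ Q ∈ S, P * Q = Q * P) ∧
  ∀ Q₁ Q₂ : Matrix V V ℂ, Q₁ ∈ S → Q₂ ∈ S →
    Q₁ * Q₁ = Q₁ → Q₂ * Q₂ = Q₂ →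
    (∀ M ∈ S, Q₁ * M = M * Q₁) → (∀ M ∈ S, Q₂ * M = M * Q₂) →
    Q₁ * Q₂ = 0 → Q₂ * Q₁ = 0 → P = Q₁ + Q₂ → Q₁ = 0 ∨ Q₂ = 0

/-- `𝒫(𝒞)`: the set of central primitive idempotents of the adjacency algebra. -/
def CPIs [Fintype V] [DecidableEq V] (ℛ : Set (Set (V × V))) : Set (Matrix V V ℂ) :=
  {P | IsCPIin (adjAlg ℛ : Set (Matrix V V ℂ)) P}

/-- The adjacency algebra `I_X · 𝒜(𝒞) · I_X` of the homogeneous component `𝒞_X`,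
as a subset of `Mat_V(ℂ)`. -/
def compAlgSet [Fintype V] [DecidableEq V] (ℛ : Set (Set (V × V))) (X : Set V) :
    Set (Matrix V V ℂ) :=
  {M | ∃ N ∈ adjAlg ℛ, M = idMat X * N * idMat X}

/-- `𝒫(𝒞_X)`: the central primitive idempotents of the homogeneous component `𝒞_X`. -/
def CPIsComp [Fintype V] [DecidableEq V] (ℛ : Set (Set (V × V))) (X : Set V) :
    Set (Matrix V V ℂ) :=
  {P | IsCPIin (compAlgSet ℛ X) P}

/-- The degree `n_P` of a central primitive idempotent `P` of the algebra (given as the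
set `S`): the positive integer with `n_P ^ 2 = dim_ℂ (S · P)`. -/
noncomputable def degOf [Fintype V] [DecidableEq V] (S : Set (Matrix V V ℂ))
    (P : Matrix V V ℂ) : ℕ :=
  Nat.sqrt (Module.finrank ℂ
    (Submodule.span ℂ {M : Matrix V V ℂ | ∃ a ∈ S, M = a * P}))

/-- The principal idempotent `P₀ = Σ_{X ∈ Fib(𝒞)} J_X / |X|`: its `(u,v)`-entry is
`1/|X|` when `u, v` lie in a common fiber `X`, and `0` otherwise. -/
noncomputable def P0 [Fintype V] (ℛ : Set (Set (V × V))) : Matrix V V ℂ :=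
  fun u v =>
    if h : ∃ X : Set V, IsFiber ℛ X ∧ u ∈ X ∧ v ∈ X then ((Nat.card h.choose : ℂ))⁻¹ else 0

/-!
The principal idempotent `P₀` is a central primitive idempotent, and every central idempotent
absorbed by `P₀` is `0` or `P₀`; hence `P P₀ = 0` for every other central primitive
idempotent `P`.

If every basis relation between `U` and `U'` is a full block `X × Y`, then `P₀ A_{X×Y} = A_{X×Y}`,
so such a `P` annihilates these relations. Then `P I_U` and `P I_{U'}` are orthogonal central
idempotents with sum `P`, and primitivity leaves only one of them nonzero.

Conversely, if a basis relation `R` from `X ⊆ U` to `Y ⊆ U'` is not the full block, then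
`A_R ≠ P₀ A_R`, so some central primitive idempotent `P ≠ P₀` has `P A_R ≠ 0`; as
`A_R = I_U A_R I_{U'}` and `P` is central, `P` meets both `I_U` and `I_{U'}`.
-/

namespace IsCC

variable [Fintype V] {ℛ : Set (Set (V × V))}

theorem nonempty (hCC : IsCC ℛ) {R : Set (V × V)} (hR : R ∈ ℛ) : R.Nonempty :=
  hCC.1 R hR

theorem transp_mem (hCC : IsCC ℛ) {R : Set (V × V)} (hR : R ∈ ℛ) : transp R ∈ ℛ :=
  hCC.2.2.2.1 R hR

theorem fst_eq_snd_of_mem (hCC : IsCC ℛ) {R : Set (V × V)} (hR : R ∈ ℛ) {p q : V × V}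
    (hp : p ∈ R) (hpp : p.1 = p.2) (hq : q ∈ R) : q.1 = q.2 :=
  hCC.2.2.1 R hR ⟨p, hp, hpp⟩ q hq

theorem iNum_eq (hCC : IsCC ℛ) {R S T : Set (V × V)} (hR : R ∈ ℛ) (hS : S ∈ ℛ) (hT : T ∈ ℛ)
    {p q : V × V} (hp : p ∈ T) (hq : q ∈ T) : iNum R S p = iNum R S q :=
  hCC.2.2.2.2 R hR S hS T hT p hp q hq

theorem eq_of_mem (hCC : IsCC ℛ) {R S : Set (V × V)} {p : V × V} (hR : R ∈ ℛ) (hS : S ∈ ℛ)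
    (hpR : p ∈ R) (hpS : p ∈ S) : R = S :=
  (hCC.2.1 p).unique ⟨hR, hpR⟩ ⟨hS, hpS⟩

theorem exists_mem (hCC : IsCC ℛ) (p : V × V) : ∃ R ∈ ℛ, p ∈ R :=
  (hCC.2.1 p).exists

theorem eq_of_subset (hCC : IsCC ℛ) {R S : Set (V × V)} (hR : R ∈ ℛ) (hS : S ∈ ℛ)
    (h : R ⊆ S) : R = S :=
  let ⟨_, hp⟩ := hCC.nonempty hR
  hCC.eq_of_mem hR hS hp (h hp)

theorem exists_isFiber_mem (hCC : IsCC ℛ) (x : V) : ∃ X, IsFiber ℛ X ∧ x ∈ X := by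
  obtain ⟨R, hR, hxx⟩ := hCC.exists_mem (x, x)
  have hdiag : ∀ p ∈ R, p.1 = p.2 := fun _ => hCC.fst_eq_snd_of_mem hR hxx rfl
  have hR_eq : diag {v | (v, v) ∈ R} = R := by
    ext ⟨u, v⟩
    refine ⟨fun ⟨_, huv⟩ => ?_, fun huv => ⟨?_, hdiag _ huv⟩⟩
    · simp_all
    · obtain rfl : u = v := hdiag _ huv
      exact huv
  exact ⟨{v | (v, v) ∈ R}, ⟨⟨x, hxx⟩, by rwa [hR_eq]⟩, hxx⟩

theorem isFiber_eq (hCC : IsCC ℛ) {X Y : Set V} (hX : IsFiber ℛ X) (hY : IsFiber ℛ Y) {x : V}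
    (hxX : x ∈ X) (hxY : x ∈ Y) : X = Y := by
  have h := hCC.eq_of_mem hX.2 hY.2 (p := (x, x)) ⟨hxX, rfl⟩ ⟨hxY, rfl⟩
  ext v
  constructor
  · intro hv
    have : (v, v) ∈ diag Y := h ▸ ⟨hv, rfl⟩
    exact this.1
  · intro hv
    have : (v, v) ∈ diag X := h ▸ ⟨hv, rfl⟩
    exact this.1

theorem mem_iff_of_isFiber (hCC : IsCC ℛ) {X Z : Set V} (hX : IsFiber ℛ X) (hZ : IsFiber ℛ Z)
    {u u' : V} (hu : u ∈ Z) (hu' : u' ∈ Z) : u ∈ X ↔ u' ∈ X :=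
  ⟨fun h => hCC.isFiber_eq hZ hX hu h ▸ hu', fun h => hCC.isFiber_eq hZ hX hu' h ▸ hu⟩

theorem subset_or_subset_compl (hCC : IsCC ℛ) {U X : Set V} (hU : IsFiberUnion ℛ U)
    (hX : IsFiber ℛ X) : X ⊆ U ∨ X ⊆ Uᶜ := by
  obtain ⟨F, hF, rfl⟩ := hU
  by_cases h : ∃ Y ∈ F, (X ∩ Y).Nonempty
  · obtain ⟨Y, hYF, x, hxX, hxY⟩ := h
    exact .inl (hCC.isFiber_eq hX (hF Y hYF) hxX hxY ▸ Set.subset_sUnion_of_mem hYF)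
  · push Not at h
    exact .inr fun x hxX ⟨Y, hYF, hxY⟩ => (h Y hYF).subset ⟨hxX, hxY⟩

/-- The intersection number `c_{Δ_X R}^R` at `p` detects whether `p.1 ∈ X`. -/
theorem fst_mem_iff (hCC : IsCC ℛ) {R : Set (V × V)} {X : Set V} (hR : R ∈ ℛ)
    (hX : IsFiber ℛ X) {p q : V × V} (hp : p ∈ R) (hq : q ∈ R) : p.1 ∈ X ↔ q.1 ∈ X := by
  have key : ∀ r ∈ R, iNum (diag X) R r = if r.1 ∈ X then 1 else 0 := by
    intro r hr
    have : {w | (r.1, w) ∈ diag X ∧ (w, r.2) ∈ R} = if r.1 ∈ X then {r.1} else ∅ := by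
      ext w; split_ifs <;> simp_all [diag, eq_comm]
    rw [iNum, this]; split_ifs <;> simp
  have := hCC.iNum_eq hX.2 hR hR hp hq
  rw [key p hp, key q hq] at this
  split_ifs at this <;> simp_all

theorem snd_mem_iff (hCC : IsCC ℛ) {R : Set (V × V)} {Y : Set V} (hR : R ∈ ℛ)
    (hY : IsFiber ℛ Y) {p q : V × V} (hp : p ∈ R) (hq : q ∈ R) : p.2 ∈ Y ↔ q.2 ∈ Y :=
  hCC.fst_mem_iff (hCC.transp_mem hR) hY (p := p.swap) (q := q.swap) hp hq

theorem subset_prod_of_mem (hCC : IsCC ℛ) {R : Set (V × V)} {X Y : Set V} (hR : R ∈ ℛ)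
    (hX : IsFiber ℛ X) (hY : IsFiber ℛ Y) {p : V × V} (hp : p ∈ R) (hpX : p.1 ∈ X)
    (hpY : p.2 ∈ Y) : R ⊆ X ×ˢ Y := fun _ hq =>
  ⟨(hCC.fst_mem_iff hR hX hp hq).1 hpX, (hCC.snd_mem_iff hR hY hp hq).1 hpY⟩

theorem exists_subset_prod (hCC : IsCC ℛ) {R : Set (V × V)} (hR : R ∈ ℛ) :
    ∃ X Y, IsFiber ℛ X ∧ IsFiber ℛ Y ∧ R ⊆ X ×ˢ Y := by
  obtain ⟨p, hp⟩ := hCC.nonempty hR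
  obtain ⟨X, hX, hpX⟩ := hCC.exists_isFiber_mem p.1
  obtain ⟨Y, hY, hpY⟩ := hCC.exists_isFiber_mem p.2
  exact ⟨X, Y, hX, hY, hCC.subset_prod_of_mem hR hX hY hp hpX hpY⟩

theorem card_out_eq (hCC : IsCC ℛ) {R : Set (V × V)} {X : Set V} (hR : R ∈ ℛ)
    (hX : IsFiber ℛ X) {u u' : V} (hu : u ∈ X) (hu' : u' ∈ X) :
    Nat.card {w | (u, w) ∈ R} = Nat.card {w | (u', w) ∈ R} := by
  simpa [iNum, transp] using
    hCC.iNum_eq hR (hCC.transp_mem hR) hX.2 (p := (u, u)) (q := (u', u')) ⟨hu, rfl⟩ ⟨hu', rfl⟩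

theorem card_relsBtw_eq_one_iff (hCC : IsCC ℛ) {X Y : Set V} (hX : IsFiber ℛ X)
    (hY : IsFiber ℛ Y) : Nat.card (relsBtw ℛ X Y) = 1 ↔ X ×ˢ Y ∈ ℛ := by
  constructor
  · intro h
    obtain ⟨⟨R, hR, hRXY⟩, huniq⟩ := Nat.card_eq_one_iff_exists.mp h
    refine (Set.Subset.antisymm hRXY fun p hp => ?_) ▸ hR
    obtain ⟨S, hS, hpS⟩ := hCC.exists_mem p
    have hSR : S = R := congrArg Subtype.val
      (huniq ⟨S, hS, hCC.subset_prod_of_mem hS hX hY hpS hp.1 hp.2⟩)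
    exact hSR ▸ hpS
  · intro h
    have : relsBtw ℛ X Y = {X ×ˢ Y} :=
      Set.eq_singleton_iff_unique_mem.mpr ⟨⟨h, subset_rfl⟩,
        fun R ⟨hR, hRXY⟩ => hCC.eq_of_subset hR h hRXY⟩
    rw [this, Nat.card_unique]

end IsCC

theorem IsFiber.card_ne_zero [Fintype V] {ℛ : Set (Set (V × V))} {X : Set V}
    (hX : IsFiber ℛ X) : (Nat.card X : ℂ) ≠ 0 := by
  have := hX.1.to_subtype
  exact_mod_cast Nat.card_pos.ne'

theorem IsFiber.isFiberUnion [Fintype V] {ℛ : Set (Set (V × V))} {X : Set V}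
    (hX : IsFiber ℛ X) : IsFiberUnion ℛ X :=
  ⟨{X}, by simpa using hX, by simp⟩

open scoped Matrix

section Matrices

variable [Fintype V]

theorem idMat_mul_apply (W : Set V) (M : Matrix V V ℂ) (u v : V) :
    (idMat W * M) u v = if u ∈ W then M u v else 0 := by
  rw [Matrix.mul_apply, Finset.sum_eq_single u] <;> aesop (add simp idMat)

theorem mul_idMat_apply (W : Set V) (M : Matrix V V ℂ) (u v : V) :
    (M * idMat W) u v = if v ∈ W then M u v else 0 := by
  rw [Matrix.mul_apply, Finset.sum_eq_single v] <;> aesop (add simp idMat)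

theorem idMat_mul_self (W : Set V) : idMat W * idMat W = idMat W := by
  ext u v
  rw [idMat_mul_apply]
  aesop (add simp idMat)

theorem idMat_compl [DecidableEq V] (W : Set V) : idMat Wᶜ = 1 - idMat W := by
  ext u v
  by_cases huv : u = v
  · subst huv
    by_cases hu : u ∈ W <;> simp [idMat, hu]
  · simp [idMat, huv]

theorem idMat_mul_adjMat_of_subset {R : Set (V × V)} {W X Y : Set V} (hR : R ⊆ X ×ˢ Y)
    (hX : X ⊆ W) : idMat W * adjMat R = adjMat R := by
  ext u v
  rw [idMat_mul_apply]
  by_cases huv : (u, v) ∈ R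
  · simp [adjMat, huv, hX (hR huv).1]
  · simp [adjMat, huv]

theorem idMat_mul_adjMat_of_subset_compl {R : Set (V × V)} {W X Y : Set V} (hR : R ⊆ X ×ˢ Y)
    (hX : X ⊆ Wᶜ) : idMat W * adjMat R = 0 := by
  ext u v
  rw [idMat_mul_apply]
  by_cases huv : (u, v) ∈ R
  · have hu : u ∉ W := hX (hR huv).1
    simp [hu]
  · simp [adjMat, huv]

theorem adjMat_mul_idMat_of_subset {R : Set (V × V)} {W X Y : Set V} (hR : R ⊆ X ×ˢ Y)
    (hY : Y ⊆ W) : adjMat R * idMat W = adjMat R := by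
  ext u v
  rw [mul_idMat_apply]
  by_cases huv : (u, v) ∈ R
  · simp [adjMat, huv, hY (hR huv).2]
  · simp [adjMat, huv]

theorem adjMat_mul_idMat_of_subset_compl {R : Set (V × V)} {W X Y : Set V} (hR : R ⊆ X ×ˢ Y)
    (hY : Y ⊆ Wᶜ) : adjMat R * idMat W = 0 := by
  ext u v
  rw [mul_idMat_apply]
  by_cases huv : (u, v) ∈ R
  · have hv : v ∉ W := hY (hR huv).2
    simp [hv]
  · simp [adjMat, huv]

theorem adjMat_transp (R : Set (V × V)) : adjMat (transp R) = (adjMat R)ᵀ := by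
  ext u v
  simp [adjMat, transp]

theorem sum_adjMat_apply (R : Set (V × V)) (u : V) :
    ∑ w, adjMat R u w = Nat.card {w | (u, w) ∈ R} := by
  simp [adjMat, Finset.sum_boole]

end Matrices

section AdjacencyAlgebra

variable [Fintype V] [DecidableEq V] {ℛ : Set (Set (V × V))}

theorem adjMat_mem_adjAlg {R : Set (V × V)} (hR : R ∈ ℛ) : adjMat R ∈ adjAlg ℛ :=
  Algebra.subset_adjoin ⟨R, hR, rfl⟩

theorem mul_comm_of_forall_adjMat {z : Matrix V V ℂ}
    (h : ∀ R ∈ ℛ, z * adjMat R = adjMat R * z) : ∀ a ∈ adjAlg ℛ, z * a = a * z := by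
  have hle : adjAlg ℛ ≤ Subalgebra.centralizer ℂ {z} := Algebra.adjoin_le <| by
    rintro _ ⟨R, hR, rfl⟩
    exact (Subalgebra.mem_centralizer_iff ℂ).mpr fun g hg => hg ▸ h R hR
  intro a ha
  exact (Subalgebra.mem_centralizer_iff ℂ).mp (hle ha) z rfl

theorem IsCC.mem_adjAlg_of_forall (hCC : IsCC ℛ) {M : Matrix V V ℂ}
    (h : ∀ R ∈ ℛ, ∀ p ∈ R, ∀ q ∈ R, M p.1 p.2 = M q.1 q.2) : M ∈ adjAlg ℛ := by
  let c : Set (V × V) → ℂ := fun R => if hR : R.Nonempty then M hR.some.1 hR.some.2 else 0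
  have hM : M = ∑ R ∈ ℛ.toFinite.toFinset, c R • adjMat R := by
    ext u v
    obtain ⟨R, hR, huv⟩ := hCC.exists_mem (u, v)
    rw [Matrix.sum_apply, Finset.sum_eq_single_of_mem R (by simpa using hR)]
    · have hne : R.Nonempty := ⟨_, huv⟩
      simp [c, adjMat, huv, hne, h R hR _ hne.some_mem _ huv]
    · intro S hS hSR
      have : (u, v) ∉ S := fun huvS => hSR (hCC.eq_of_mem (by simpa using hS) hR huvS huv)
      simp [adjMat, this]
  rw [hM]
  exact Subalgebra.sum_mem _ fun R hR =>
    Subalgebra.smul_mem _ (adjMat_mem_adjAlg (by simpa using hR)) _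

theorem IsCC.idMat_mem_adjAlg (hCC : IsCC ℛ) {U : Set V} (hU : IsFiberUnion ℛ U) :
    idMat U ∈ adjAlg ℛ := by
  refine hCC.mem_adjAlg_of_forall fun R hR p hp q hq => ?_
  obtain ⟨X, Y, hX, -, hRXY⟩ := hCC.exists_subset_prod hR
  have hdiag : p.1 = p.2 ↔ q.1 = q.2 :=
    ⟨(hCC.fst_eq_snd_of_mem hR hp · hq), (hCC.fst_eq_snd_of_mem hR hq · hp)⟩
  have hmem : p.1 ∈ U ↔ q.1 ∈ U := by
    rcases hCC.subset_or_subset_compl hU hX with hXU | hXU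
    · exact iff_of_true (hXU (hRXY hp).1) (hXU (hRXY hq).1)
    · exact iff_of_false (hXU (hRXY hp).1) (hXU (hRXY hq).1)
  simp only [idMat]
  congr 1
  exact propext (and_congr hdiag hmem)

end AdjacencyAlgebra

theorem range_mulRight_lt {K A : Type*} [Field K] [Ring A] [Algebra K A] {e Q Q' : A}
    (hsum : e = Q + Q') (hQQ : Q * Q = Q) (hQ'Q' : Q' * Q' = Q') (hQQ' : Q * Q' = 0)
    (hQ'Q : Q' * Q = 0) (hQ' : Q' ≠ 0) :
    LinearMap.range (LinearMap.mulRight K Q) < LinearMap.range (LinearMap.mulRight K e) := by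
  refine lt_of_le_of_ne ?_ fun h => hQ' ?_
  · rintro _ ⟨z, rfl⟩
    exact ⟨z * Q, by simp [hsum, mul_add, mul_assoc, hQQ, hQQ']⟩
  · obtain ⟨z, hz⟩ : Q' ∈ LinearMap.range (LinearMap.mulRight K Q) :=
      h ▸ ⟨Q', by simp [hsum, mul_add, hQ'Q, hQ'Q']⟩
    rw [LinearMap.mulRight_apply] at hz
    rw [← hQ'Q']
    nth_rewrite 1 [← hz]
    rw [mul_assoc, hQQ', mul_zero]

/-- Induction on `dim (Mat_V(ℂ) · e)`: a non-primitive `e` splits into two orthogonal central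
idempotents with smaller such ideals, and one of them still does not annihilate `M`. -/
theorem exists_isCPIin_mul_ne_zero [Fintype V] [DecidableEq V]
    (S : Subalgebra ℂ (Matrix V V ℂ)) {e M : Matrix V V ℂ} (he : e ∈ S) (hee : e * e = e)
    (hec : ∀ a ∈ S, e * a = a * e) (heM : e * M ≠ 0) :
    ∃ P, IsCPIin (S : Set (Matrix V V ℂ)) P ∧ P * M ≠ 0 := by
  induction hn : Module.finrank ℂ (LinearMap.range (LinearMap.mulRight ℂ e))
    using Nat.strong_induction_on generalizing e with
  | _ n ih =>
  by_cases hprim : IsCPIin (S : Set (Matrix V V ℂ)) e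
  · exact ⟨e, hprim, heM⟩
  have he0 : e ≠ 0 := by rintro rfl; simp at heM
  unfold IsCPIin at hprim
  push Not at hprim
  obtain ⟨Q₁, Q₂, hQ₁, hQ₂, hQ₁Q₁, hQ₂Q₂, hQ₁c, hQ₂c, hQ₁Q₂, hQ₂Q₁, hsum, hQ₁0, hQ₂0⟩ :=
    hprim he he0 hee hec
  have hM : Q₁ * M ≠ 0 ∨ Q₂ * M ≠ 0 := by
    by_contra! h
    exact heM (by rw [hsum, add_mul, h.1, h.2, add_zero])
  rcases hM with hM | hM
  · exact ih _ (hn ▸ Submodule.finrank_lt_finrank_of_lt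
      (range_mulRight_lt hsum hQ₁Q₁ hQ₂Q₂ hQ₁Q₂ hQ₂Q₁ hQ₂0)) hQ₁ hQ₁Q₁ hQ₁c hM rfl
  · exact ih _ (hn ▸ Submodule.finrank_lt_finrank_of_lt
      (range_mulRight_lt (hsum.trans (add_comm _ _)) hQ₂Q₂ hQ₁Q₁ hQ₂Q₁ hQ₁Q₂ hQ₁0))
      hQ₂ hQ₂Q₂ hQ₂c hM rfl

namespace IsCC

variable [Fintype V] {ℛ : Set (Set (V × V))}

theorem P0_apply_of_mem (hCC : IsCC ℛ) {X : Set V} (hX : IsFiber ℛ X) {u v : V} (hu : u ∈ X)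
    (hv : v ∈ X) : P0 ℛ u v = (Nat.card X : ℂ)⁻¹ := by
  have h : ∃ Z, IsFiber ℛ Z ∧ u ∈ Z ∧ v ∈ Z := ⟨X, hX, hu, hv⟩
  rw [P0, dif_pos h, hCC.isFiber_eq h.choose_spec.1 hX h.choose_spec.2.1 hu]

theorem P0_apply_of_notMem (hCC : IsCC ℛ) {X : Set V} (hX : IsFiber ℛ X) {u v : V}
    (hu : u ∈ X) (hv : v ∉ X) : P0 ℛ u v = 0 := by
  rw [P0, dif_neg]
  rintro ⟨Z, hZ, huZ, hvZ⟩
  exact hv (hCC.isFiber_eq hZ hX huZ hu ▸ hvZ)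

theorem P0_apply_self_ne_zero (hCC : IsCC ℛ) (u : V) : P0 ℛ u u ≠ 0 := by
  obtain ⟨X, hX, hu⟩ := hCC.exists_isFiber_mem u
  rw [hCC.P0_apply_of_mem hX hu hu]
  exact inv_ne_zero hX.card_ne_zero

theorem P0_ne_zero [Nonempty V] (hCC : IsCC ℛ) : P0 ℛ ≠ 0 := fun h =>
  hCC.P0_apply_self_ne_zero (Classical.arbitrary V) (by rw [h]; rfl)

theorem P0_mul_idMat_ne_zero (hCC : IsCC ℛ) {W : Set V} (hW : W.Nonempty) :
    P0 ℛ * idMat W ≠ 0 := by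
  obtain ⟨x, hx⟩ := hW
  intro h
  have := congrFun (congrFun h x) x
  rw [mul_idMat_apply, if_pos hx] at this
  exact hCC.P0_apply_self_ne_zero x this

theorem transpose_P0 (hCC : IsCC ℛ) : (P0 ℛ)ᵀ = P0 ℛ := by
  ext u v
  obtain ⟨X, hX, hu⟩ := hCC.exists_isFiber_mem u
  rw [Matrix.transpose_apply]
  by_cases hv : v ∈ X
  · rw [hCC.P0_apply_of_mem hX hu hv, hCC.P0_apply_of_mem hX hv hu]
  · obtain ⟨Y, hY, hvY⟩ := hCC.exists_isFiber_mem v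
    rw [hCC.P0_apply_of_notMem hX hu hv,
      hCC.P0_apply_of_notMem hY hvY fun huY => hv (hCC.isFiber_eq hY hX huY hu ▸ hvY)]

theorem P0_mul_apply (hCC : IsCC ℛ) {X : Set V} (hX : IsFiber ℛ X) {u : V} (hu : u ∈ X)
    (M : Matrix V V ℂ) (v : V) :
    (P0 ℛ * M) u v = (Nat.card X : ℂ)⁻¹ * ∑ w ∈ X.toFinset, M w v := by
  rw [Matrix.mul_apply, Finset.mul_sum,
    ← Finset.sum_subset (Finset.subset_univ X.toFinset) fun w _ hw => ?_]
  · exact Finset.sum_congr rfl fun w hw => by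
      rw [hCC.P0_apply_of_mem hX hu (Set.mem_toFinset.mp hw)]
  · rw [hCC.P0_apply_of_notMem hX hu (by simpa using hw), zero_mul]

theorem mul_P0_apply (hCC : IsCC ℛ) {Y : Set V} (hY : IsFiber ℛ Y) {v : V} (hv : v ∈ Y)
    (M : Matrix V V ℂ) (u : V) :
    (M * P0 ℛ) u v = (Nat.card Y : ℂ)⁻¹ * ∑ w ∈ Y.toFinset, M u w := by
  rw [← Matrix.transpose_apply (M * P0 ℛ), Matrix.transpose_mul, hCC.transpose_P0,
    hCC.P0_mul_apply hY hv]
  rfl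

theorem P0_mul_eq_self_iff (hCC : IsCC ℛ) {M : Matrix V V ℂ} :
    P0 ℛ * M = M ↔ ∀ X, IsFiber ℛ X → ∀ u ∈ X, ∀ u' ∈ X, ∀ v, M u v = M u' v := by
  constructor
  · intro h X hX u hu u' hu' v
    rw [← h, hCC.P0_mul_apply hX hu, hCC.P0_mul_apply hX hu']
  · intro h
    ext u v
    obtain ⟨X, hX, hu⟩ := hCC.exists_isFiber_mem u
    rw [hCC.P0_mul_apply hX hu,
      Finset.sum_congr rfl fun w hw => h X hX w (Set.mem_toFinset.mp hw) u hu v,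
      Finset.sum_const, nsmul_eq_mul, ← Nat.card_eq_card_toFinset,
      inv_mul_cancel_left₀ hX.card_ne_zero]

theorem apply_eq_of_mul_P0_eq (hCC : IsCC ℛ) {M : Matrix V V ℂ} (h : M * P0 ℛ = M)
    {Y : Set V} (hY : IsFiber ℛ Y) {v v' : V} (hv : v ∈ Y) (hv' : v' ∈ Y) (u : V) :
    M u v = M u v' := by
  rw [← h, hCC.mul_P0_apply hY hv, hCC.mul_P0_apply hY hv']

theorem P0_mul_P0 (hCC : IsCC ℛ) : P0 ℛ * P0 ℛ = P0 ℛ := by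
  refine hCC.P0_mul_eq_self_iff.mpr fun X hX u hu u' hu' v => ?_
  by_cases hv : v ∈ X
  · rw [hCC.P0_apply_of_mem hX hu hv, hCC.P0_apply_of_mem hX hu' hv]
  · rw [hCC.P0_apply_of_notMem hX hu hv, hCC.P0_apply_of_notMem hX hu' hv]

theorem P0_mul_adjMat_prod (hCC : IsCC ℛ) {X : Set V} (hX : IsFiber ℛ X) (Y : Set V) :
    P0 ℛ * adjMat (X ×ˢ Y) = adjMat (X ×ˢ Y) :=
  hCC.P0_mul_eq_self_iff.mpr fun _ hZ _ hu _ hu' _ => by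
    simp [adjMat, hCC.mem_iff_of_isFiber hX hZ hu hu']

theorem sum_adjMat_eq (hCC : IsCC ℛ) {R : Set (V × V)} {X Y : Set V} (hR : R ∈ ℛ)
    (hX : IsFiber ℛ X) (hY : IsFiber ℛ Y) {u u' : V} (hu : u ∈ X) (hu' : u' ∈ X) :
    ∑ w ∈ Y.toFinset, adjMat R u w = ∑ w ∈ Y.toFinset, adjMat R u' w := by
  obtain ⟨_, Y₀, -, hY₀, hRsub⟩ := hCC.exists_subset_prod hR
  by_cases hYY₀ : Y = Y₀
  · subst hYY₀
    have hsum (x : V) : ∑ w ∈ Y.toFinset, adjMat R x w = ∑ w, adjMat R x w :=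
      Finset.sum_subset (Finset.subset_univ _) fun w _ hw => by
        have : (x, w) ∉ R := fun h => (Set.mem_toFinset.not.mp hw) (hRsub h).2
        simp [adjMat, this]
    rw [hsum, hsum, sum_adjMat_apply, sum_adjMat_apply, hCC.card_out_eq hR hX hu hu']
  · have hsum (x : V) : ∑ w ∈ Y.toFinset, adjMat R x w = 0 :=
      Finset.sum_eq_zero fun w hw => by
        have : (x, w) ∉ R := fun h =>
          hYY₀ (hCC.isFiber_eq hY hY₀ (Set.mem_toFinset.mp hw) (hRsub h).2)
        simp [adjMat, this]
    rw [hsum, hsum]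

theorem P0_mul_adjMat_mul_P0 (hCC : IsCC ℛ) {R : Set (V × V)} (hR : R ∈ ℛ) :
    P0 ℛ * (adjMat R * P0 ℛ) = adjMat R * P0 ℛ := by
  refine hCC.P0_mul_eq_self_iff.mpr fun X hX u hu u' hu' v => ?_
  obtain ⟨Y, hY, hv⟩ := hCC.exists_isFiber_mem v
  rw [hCC.mul_P0_apply hY hv, hCC.mul_P0_apply hY hv, hCC.sum_adjMat_eq hR hX hY hu hu']

/-- `P₀` is symmetric, so transposing `P0_mul_adjMat_mul_P0` for `Rᵗ` gives
`P₀ A_R = P₀ A_R P₀`. -/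
theorem P0_mul_adjMat (hCC : IsCC ℛ) {R : Set (V × V)} (hR : R ∈ ℛ) :
    P0 ℛ * adjMat R = adjMat R * P0 ℛ :=
  calc P0 ℛ * adjMat R = (adjMat (transp R) * P0 ℛ)ᵀ := by
        rw [Matrix.transpose_mul, hCC.transpose_P0, adjMat_transp, Matrix.transpose_transpose]
    _ = (P0 ℛ * (adjMat (transp R) * P0 ℛ))ᵀ := by
        rw [hCC.P0_mul_adjMat_mul_P0 (hCC.transp_mem hR)]
    _ = P0 ℛ * (adjMat R * P0 ℛ) := by
        rw [Matrix.transpose_mul, Matrix.transpose_mul, hCC.transpose_P0, adjMat_transp,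
          Matrix.transpose_transpose, mul_assoc]
    _ = adjMat R * P0 ℛ := hCC.P0_mul_adjMat_mul_P0 hR

theorem eq_prod_of_P0_mul_adjMat (hCC : IsCC ℛ) {R : Set (V × V)} {X Y : Set V} (hR : R ∈ ℛ)
    (hX : IsFiber ℛ X) (hY : IsFiber ℛ Y) (hRXY : R ⊆ X ×ˢ Y)
    (h : P0 ℛ * adjMat R = adjMat R) : R = X ×ˢ Y := by
  obtain ⟨⟨x, y⟩, hxy⟩ := hCC.nonempty hR
  have hrow := hCC.P0_mul_eq_self_iff.mp h X hX
  have hcol : adjMat R * P0 ℛ = adjMat R := (hCC.P0_mul_adjMat hR).symm.trans h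
  refine hRXY.antisymm fun ⟨u, v⟩ ⟨hu, hv⟩ => ?_
  have : adjMat R u v = adjMat R x y :=
    (hrow u hu x (hRXY hxy).1 v).trans (hCC.apply_eq_of_mul_P0_eq hcol hY hv (hRXY hxy).2 x)
  by_contra huv
  simp [adjMat, huv, hxy] at this

variable [DecidableEq V]

theorem P0_mem_adjAlg (hCC : IsCC ℛ) : P0 ℛ ∈ adjAlg ℛ := by
  refine hCC.mem_adjAlg_of_forall fun R hR p hp q hq => ?_
  obtain ⟨X, Y, hX, hY, hRXY⟩ := hCC.exists_subset_prod hR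
  obtain ⟨hpX, hpY⟩ := hRXY hp
  obtain ⟨hqX, hqY⟩ := hRXY hq
  by_cases hXY : X = Y
  · subst hXY
    rw [hCC.P0_apply_of_mem hX hpX hpY, hCC.P0_apply_of_mem hX hqX hqY]
  · have hnot {y : V} (hy : y ∈ Y) : y ∉ X := fun hyX => hXY (hCC.isFiber_eq hX hY hyX hy)
    rw [hCC.P0_apply_of_notMem hX hpX (hnot hpY), hCC.P0_apply_of_notMem hX hqX (hnot hqY)]

theorem P0_mul_comm (hCC : IsCC ℛ) : ∀ a ∈ adjAlg ℛ, P0 ℛ * a = a * P0 ℛ :=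
  mul_comm_of_forall_adjMat fun _ hR => hCC.P0_mul_adjMat hR

/-- Commuting with the `I_X` makes `z` block diagonal, absorbing `P₀` makes it constant on
columns within each block, and commuting with the all-ones matrix makes all row sums equal. -/
theorem eq_smul_P0_of_mul_comm (hCC : IsCC ℛ) {z : Matrix V V ℂ}
    (hz : ∀ a ∈ adjAlg ℛ, z * a = a * z) (hP0z : P0 ℛ * z = z) : ∃ c : ℂ, z = c • P0 ℛ := by
  rcases isEmpty_or_nonempty V with hV | ⟨⟨x₀⟩⟩
  · exact ⟨0, Subsingleton.elim _ _⟩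
  have hzP0 : z * P0 ℛ = z := by rw [hz _ hCC.P0_mem_adjAlg, hP0z]
  have hblock : ∀ X, IsFiber ℛ X → ∀ u ∈ X, ∀ v ∉ X, z u v = 0 := by
    intro X hX u hu v hv
    have := congrFun (congrFun (hz _ (hCC.idMat_mem_adjAlg hX.isFiberUnion)) u) v
    simpa [idMat_mul_apply, mul_idMat_apply, hu, hv] using this.symm
  have hrow : ∀ u, ∑ w, z u w = ∑ w, z x₀ w := by
    have hJ := hz (adjMat Set.univ) (hCC.mem_adjAlg_of_forall (by simp [adjMat]))
    have hsum (u v : V) : ∑ w, z u w = ∑ w, z w v := by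
      simpa [Matrix.mul_apply, adjMat] using congrFun (congrFun hJ u) v
    intro u
    rw [hsum u x₀, hsum x₀ x₀]
  refine ⟨∑ w, z x₀ w, ?_⟩
  ext u v
  obtain ⟨X, hX, hu⟩ := hCC.exists_isFiber_mem u
  by_cases hv : v ∈ X
  · have hrowX : ∑ w, z u w = Nat.card X * z u v := by
      rw [← Finset.sum_subset (Finset.subset_univ X.toFinset)
          fun w _ hw => hblock X hX u hu w (by simpa using hw),
        Finset.sum_congr rfl fun w hw =>
          hCC.apply_eq_of_mul_P0_eq hzP0 hX (Set.mem_toFinset.mp hw) hv u,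
        Finset.sum_const, nsmul_eq_mul, ← Nat.card_eq_card_toFinset]
    rw [Matrix.smul_apply, smul_eq_mul, hCC.P0_apply_of_mem hX hu hv, ← hrow u, hrowX,
      mul_comm, inv_mul_cancel_left₀ hX.card_ne_zero]
  · rw [hblock X hX u hu v hv, Matrix.smul_apply, hCC.P0_apply_of_notMem hX hu hv, smul_zero]

theorem eq_zero_or_eq_P0 (hCC : IsCC ℛ) {z : Matrix V V ℂ}
    (hz : ∀ a ∈ adjAlg ℛ, z * a = a * z) (hP0z : P0 ℛ * z = z) (hzz : z * z = z) :
    z = 0 ∨ z = P0 ℛ := by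
  obtain ⟨c, rfl⟩ := hCC.eq_smul_P0_of_mul_comm hz hP0z
  by_cases hP0 : P0 ℛ = 0
  · simp [hP0]
  rw [smul_mul_smul_comm, hCC.P0_mul_P0] at hzz
  have hc : c * (c - 1) = 0 := by
    linear_combination smul_left_injective ℂ hP0 hzz
  rcases mul_eq_zero.mp hc with hc | hc
  · simp [hc]
  · simp [sub_eq_zero.mp hc]

/-- `P * P₀` is a central idempotent absorbed by `P₀`; if it equals `P₀`, then
`P = P₀ + (P - P₀)` splits `P` into orthogonal central idempotents. -/
theorem mul_P0_eq_zero_of_isCPIin (hCC : IsCC ℛ) {P : Matrix V V ℂ}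
    (hP : IsCPIin (adjAlg ℛ : Set (Matrix V V ℂ)) P) (hne : P ≠ P0 ℛ) : P * P0 ℛ = 0 := by
  obtain ⟨hPA, -, hPP, hPc, hprim⟩ := hP
  have hP0A := hCC.P0_mem_adjAlg
  have hP0P : P0 ℛ * P = P * P0 ℛ := (hPc _ hP0A).symm
  rcases hCC.eq_zero_or_eq_P0 (z := P * P0 ℛ)
    (fun a ha => by rw [mul_assoc, hCC.P0_mul_comm a ha, ← mul_assoc, hPc a ha, mul_assoc])
    (by rw [← mul_assoc, hP0P, mul_assoc, hCC.P0_mul_P0])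
    (by rw [mul_assoc, ← mul_assoc (P0 ℛ), hP0P, mul_assoc, hCC.P0_mul_P0, ← mul_assoc, hPP])
    with h | h
  · exact h
  have h' : P0 ℛ * P = P0 ℛ := hP0P ▸ h
  rcases hprim (P0 ℛ) (P - P0 ℛ) hP0A (sub_mem hPA hP0A) hCC.P0_mul_P0
      (by rw [sub_mul, mul_sub, mul_sub, hPP, h, h', hCC.P0_mul_P0]; abel)
      hCC.P0_mul_comm (fun M hM => by rw [sub_mul, mul_sub, hPc M hM, hCC.P0_mul_comm M hM])
      (by rw [mul_sub, h', hCC.P0_mul_P0, sub_self]) (by rw [sub_mul, h, hCC.P0_mul_P0, sub_self])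
      (by abel) with h0 | h0
  · rw [h, h0]
  · exact absurd (sub_eq_zero.mp h0) hne

theorem isCPIin_P0 [Nonempty V] (hCC : IsCC ℛ) :
    IsCPIin (adjAlg ℛ : Set (Matrix V V ℂ)) (P0 ℛ) := by
  refine ⟨hCC.P0_mem_adjAlg, hCC.P0_ne_zero, hCC.P0_mul_P0, hCC.P0_mul_comm, ?_⟩
  intro Q₁ Q₂ _ _ hQ₁Q₁ _ hQ₁c _ _ hQ₂Q₁ hsum
  rcases hCC.eq_zero_or_eq_P0 hQ₁c (by rw [hsum, add_mul, hQ₁Q₁, hQ₂Q₁, add_zero]) hQ₁Q₁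
    with h | h
  · exact .inl h
  · rw [h] at hsum
    exact .inr (left_eq_add.mp hsum)

/-- In the direct sum, a basis relation between `U` and `Uᶜ` is a full block `X × Y`, which
is annihilated by any `P` with `P P₀ = 0`; the other relations commute with `I_U`. -/
theorem mul_idMat_mul_adjMat (hCC : IsCC ℛ) {U : Set V} (hU : IsFiberUnion ℛ U)
    (hsum : ∀ X Y, IsFiber ℛ X → IsFiber ℛ Y → X ⊆ U → Y ⊆ Uᶜ → X ×ˢ Y ∈ ℛ)
    {P : Matrix V V ℂ} (hPP0 : P * P0 ℛ = 0) {R : Set (V × V)} (hR : R ∈ ℛ) :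
    P * (idMat U * adjMat R) = P * (adjMat R * idMat U) := by
  obtain ⟨X, Y, hX, hY, hRXY⟩ := hCC.exists_subset_prod hR
  have hkill (hXY : X ×ˢ Y ∈ ℛ) : P * adjMat R = 0 := by
    rw [hCC.eq_of_subset hR hXY hRXY, ← hCC.P0_mul_adjMat_prod hX Y, ← mul_assoc, hPP0,
      zero_mul]
  rcases hCC.subset_or_subset_compl hU hX with hXU | hXU <;>
    rcases hCC.subset_or_subset_compl hU hY with hYU | hYU
  · rw [idMat_mul_adjMat_of_subset hRXY hXU, adjMat_mul_idMat_of_subset hRXY hYU]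
  · rw [idMat_mul_adjMat_of_subset hRXY hXU, adjMat_mul_idMat_of_subset_compl hRXY hYU,
      hkill (hsum X Y hX hY hXU hYU), mul_zero]
  · have hXY : X ×ˢ Y ∈ ℛ := by
      simpa [transp, Set.preimage_swap_prod] using hCC.transp_mem (hsum Y X hY hX hYU hXU)
    rw [idMat_mul_adjMat_of_subset_compl hRXY hXU, adjMat_mul_idMat_of_subset hRXY hYU,
      hkill hXY, mul_zero]
  · rw [idMat_mul_adjMat_of_subset_compl hRXY hXU, adjMat_mul_idMat_of_subset_compl hRXY hYU]

theorem mul_idMat_eq_zero_or (hCC : IsCC ℛ) {U : Set V} (hU : IsFiberUnion ℛ U)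
    (hsum : ∀ X Y, IsFiber ℛ X → IsFiber ℛ Y → X ⊆ U → Y ⊆ Uᶜ → X ×ˢ Y ∈ ℛ)
    {P : Matrix V V ℂ} (hP : IsCPIin (adjAlg ℛ : Set (Matrix V V ℂ)) P)
    (hPP0 : P * P0 ℛ = 0) : P * idMat U = 0 ∨ P * idMat Uᶜ = 0 := by
  obtain ⟨hPA, -, hPP, hPc, hprim⟩ := hP
  have hIU := hCC.idMat_mem_adjAlg hU
  set Q := P * idMat U with hQ
  have hPQ : P * Q = Q := by rw [← mul_assoc, hPP]
  have hQP : Q * P = Q := by rw [mul_assoc, ← hPc _ hIU, ← mul_assoc, hPP]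
  have hQQ : Q * Q = Q := by
    rw [hQ, mul_assoc, ← mul_assoc (idMat U), ← hPc _ hIU, mul_assoc, idMat_mul_self,
      ← mul_assoc, hPP]
  have hQc : ∀ a ∈ adjAlg ℛ, Q * a = a * Q := mul_comm_of_forall_adjMat fun R hR => by
    rw [mul_assoc, hCC.mul_idMat_mul_adjMat hU hsum hPP0 hR, ← mul_assoc,
      hPc _ (adjMat_mem_adjAlg hR), mul_assoc]
  rw [idMat_compl, mul_sub, mul_one, ← hQ]
  exact hprim _ _ (mul_mem hPA hIU) (sub_mem hPA (mul_mem hPA hIU)) hQQ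
    (by rw [sub_mul, mul_sub, mul_sub, hPP, hPQ, hQP, hQQ]; abel) hQc
    (fun a ha => by rw [sub_mul, mul_sub, hPc a ha, hQc a ha])
    (by rw [mul_sub, hQP, hQQ, sub_self]) (by rw [sub_mul, hPQ, hQQ, sub_self])
    (add_sub_cancel Q P).symm

theorem prod_mem_of_forall_isCPIin (hCC : IsCC ℛ) {U : Set V} (hU : IsFiberUnion ℛ U)
    (huniq : ∀ P, IsCPIin (adjAlg ℛ : Set (Matrix V V ℂ)) P → P * idMat U ≠ 0 →
      P * idMat Uᶜ ≠ 0 → P = P0 ℛ)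
    {X Y : Set V} (hX : IsFiber ℛ X) (hY : IsFiber ℛ Y) (hXU : X ⊆ U) (hYU : Y ⊆ Uᶜ) :
    X ×ˢ Y ∈ ℛ := by
  obtain ⟨x, hx⟩ := hX.1
  obtain ⟨y, hy⟩ := hY.1
  obtain ⟨R, hR, hxy⟩ := hCC.exists_mem (x, y)
  have hRXY := hCC.subset_prod_of_mem hR hX hY hxy hx hy
  suffices hP0R : P0 ℛ * adjMat R = adjMat R from
    hCC.eq_prod_of_P0_mul_adjMat hR hX hY hRXY hP0R ▸ hR
  by_contra hne
  obtain ⟨P, hP, hPM⟩ := exists_isCPIin_mul_ne_zero (adjAlg ℛ) (M := adjMat R - P0 ℛ * adjMat R)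
    (one_mem _) (one_mul 1) (fun a _ => by rw [one_mul, mul_one])
    (by rwa [one_mul, sub_ne_zero, ne_comm])
  have hPP0 : P ≠ P0 ℛ := by
    rintro rfl
    rw [mul_sub, ← mul_assoc, hCC.P0_mul_P0, sub_self] at hPM
    exact hPM rfl
  rw [mul_sub, ← mul_assoc, hCC.mul_P0_eq_zero_of_isCPIin hP hPP0, zero_mul, sub_zero] at hPM
  refine hPP0 (huniq P hP (fun h => hPM ?_) (fun h => hPM ?_))
  · rw [← idMat_mul_adjMat_of_subset hRXY hXU, ← mul_assoc, h, zero_mul]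
  · have hIUc : idMat Uᶜ ∈ adjAlg ℛ := by
      rw [idMat_compl]
      exact sub_mem (one_mem _) (hCC.idMat_mem_adjAlg hU)
    have hPc := hP.2.2.2.1
    rw [hPc _ (adjMat_mem_adjAlg hR), ← adjMat_mul_idMat_of_subset hRXY hYU, mul_assoc,
      ← hPc _ hIUc, h, mul_zero]

end IsCC

theorem internal_direct_sum_iff_P0_general
    {V : Type*} [Fintype V] [DecidableEq V]
    (ℛ : Set (Set (V × V))) (hCC : IsCC ℛ)
    (U U' : Set V) (hU : IsFiberUnion ℛ U)
    (hUne : U.Nonempty) (hU'ne : U'.Nonempty)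
    (hdisj : Disjoint U U') (hcover : U ∪ U' = Set.univ) :
    (∀ X Y : Set V, IsFiber ℛ X → IsFiber ℛ Y → X ⊆ U → Y ⊆ U' →
        Nat.card (relsBtw ℛ X Y) = 1) ↔
      {P ∈ CPIs ℛ | P * idMat U ≠ 0 ∧ P * idMat U' ≠ 0} = {P0 ℛ} := by
  obtain rfl : Uᶜ = U' := IsCompl.compl_eq ⟨hdisj, codisjoint_iff.mpr hcover⟩
  have : Nonempty V := ⟨hUne.some⟩
  rw [Set.eq_singleton_iff_unique_mem]
  constructor
  · intro hsum
    refine ⟨⟨hCC.isCPIin_P0, hCC.P0_mul_idMat_ne_zero hUne, hCC.P0_mul_idMat_ne_zero hU'ne⟩, ?_⟩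
    rintro P ⟨hP, hPU, hPU'⟩
    by_contra hne
    refine (hCC.mul_idMat_eq_zero_or hU (fun X Y hX hY hXU hYU => ?_) hP
      (hCC.mul_P0_eq_zero_of_isCPIin hP hne)).elim hPU hPU'
    exact (hCC.card_relsBtw_eq_one_iff hX hY).mp (hsum X Y hX hY hXU hYU)
  · rintro ⟨-, huniq⟩ X Y hX hY hXU hYU
    exact (hCC.card_relsBtw_eq_one_iff hX hY).mpr <|
      hCC.prod_mem_of_forall_isCPIin hU (fun P hP h₁ h₂ => huniq P ⟨hP, h₁, h₂⟩) hX hY hXU hYU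

/-- **Theorem (Statement 12).** For disjoint nonempty unions of fibers `U, U'` with
`V = U ∪ U'`: `𝒞 = 𝒞_U ⊞ 𝒞_{U'}` iff `𝒫_U(𝒞) ∩ 𝒫_{U'}(𝒞) = {P₀}`. -/
theorem internal_direct_sum_iff_P0
    {V : Type*} [Fintype V] [DecidableEq V] [Nonempty V]
    (ℛ : Set (Set (V × V))) (hCC : IsCC ℛ)
    (U U' : Set V) (hU : IsFiberUnion ℛ U) (hU' : IsFiberUnion ℛ U')
    (hUne : U.Nonempty) (hU'ne : U'.Nonempty)
    (hdisj : Disjoint U U') (hcover : U ∪ U' = Set.univ) :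
    (∀ X Y : Set V, IsFiber ℛ X → IsFiber ℛ Y → X ⊆ U → Y ⊆ U' →
        Nat.card (relsBtw ℛ X Y) = 1) ↔
      {P ∈ CPIs ℛ | P * idMat U ≠ 0 ∧ P * idMat U' ≠ 0} = {P0 ℛ} :=
  internal_direct_sum_iff_P0_general ℛ hCC U U' hU hUne hU'ne hdisj hcover

end CCPaper
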